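/- For the random walk on the half line with increment law Γ satisfying Γ(−∞,0) > 0: if β = ∫ x Γ(dx) > 0 and there exists γ > 0 such that ∫_{(−∞,0)} exp(−γ x) Γ(dx) < ∞, then the chain is geometrically transient. -/

import Mathlib

open MeasureTheory ProbabilityTheory
open scoped ENNReal NNReal Classical

namespace MarkovTransience

variable {X : Type*} [MeasurableSpace X]

/-- `iterP P n x A` is the `n`-step transition probability `P^n(x, A)`. -/
noncomputable def iterP (P : Kernel X X) : ℕ → X → Set X → ℝ≥0∞
  | 0 => fun x A => A.indicator (fun _ => 1) x
  | n + 1 => fun x A => ∫⁻ y, iterP P n y A ∂(P x)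

/-- `retF P A n x` is `F^n(x, A) = P_x(τ_A = n)`, the probability that the first
return to `A` happens at time `n`. -/
noncomputable def retF (P : Kernel X X) (A : Set X) : ℕ → X → ℝ≥0∞
  | 0 => fun _ => 0
  | 1 => fun x => P x A
  | n + 2 => fun x => ∫⁻ y in Aᶜ, retF P A (n + 1) y ∂(P x)

/-- `retL P A x = L(x, A) = P_x(τ_A < ∞)`. -/
noncomputable def retL (P : Kernel X X) (A : Set X) (x : X) : ℝ≥0∞ :=
  ∑' n, retF P A n x

/-- `retE P A r x = E_x[r(τ_A) 1_{τ_A < ∞}]`. -/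
noncomputable def retE (P : Kernel X X) (A : Set X) (r : ℕ → ℝ≥0∞) (x : X) : ℝ≥0∞ :=
  ∑' n, r n * retF P A n x

/-- `hitE P A r x = E_x[r(σ_A) 1_{σ_A < ∞}]`, `σ_A` the first hitting time. -/
noncomputable def hitE (P : Kernel X X) (A : Set X) (r : ℕ → ℝ≥0∞) (x : X) : ℝ≥0∞ :=
  if x ∈ A then r 0 else retE P A r x

/-- `act P W x = PW(x) = ∫ W(y) P(x, dy)`. -/
noncomputable def act (P : Kernel X X) (W : X → ℝ≥0∞) (x : X) : ℝ≥0∞ :=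
  ∫⁻ y, W y ∂(P x)

/-- `ψ`-irreducibility: `ψ` is a nontrivial σ-finite measure such that every set of
positive `ψ`-measure is reached with positive probability from every starting point. -/
def IsIrreducibility (P : Kernel X X) (ψ : Measure X) : Prop :=
  ψ ≠ 0 ∧ SigmaFinite ψ ∧
    ∀ A : Set X, MeasurableSet A → 0 < ψ A → ∀ x, 0 < ∑' n, iterP P (n + 1) x A

/-- `ψ` is a maximal irreducibility measure for `P`. -/
def IsMaxIrreducibility (P : Kernel X X) (ψ : Measure X) : Prop :=
  IsIrreducibility P ψ ∧ ∀ ψ' : Measure X, IsIrreducibility P ψ' → ψ' ≪ ψ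

/-- `A ∈ B⁺(X)`: a measurable set of positive `ψ`-measure. -/
def InBPlus (ψ : Measure X) (A : Set X) : Prop :=
  MeasurableSet A ∧ 0 < ψ A

/-- A petite set. -/
def PetiteSet (P : Kernel X X) (A : Set X) : Prop :=
  ∃ (a : ℕ → ℝ≥0∞) (ν : Measure X), (∑' n, a n) = 1 ∧ ν ≠ 0 ∧
    ∀ x ∈ A, ∀ B : Set X, MeasurableSet B → ν B ≤ ∑' n, a n * iterP P (n + 1) x B

/-- The chain is transient. -/
def Transient (P : Kernel X X) (ψ : Measure X) : Prop :=
  IsMaxIrreducibility P ψ ∧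
    ∃ A : ℕ → Set X, (⋃ i, A i) = Set.univ ∧
      ∀ i, InBPlus ψ (A i) ∧ (⨆ x ∈ A i, ∑' n, iterP P (n + 1) x (A i)) < ⊤

/-- A uniformly geometric transient set. -/
def UnifGeomTransientSet (P : Kernel X X) (A : Set X) : Prop :=
  ∃ κ : ℝ≥0, 1 < κ ∧ (⨆ x ∈ A, ∑' n, (κ : ℝ≥0∞) ^ (n + 1) * iterP P (n + 1) x A) < ⊤

/-- The chain is geometrically transient. -/
def GeomTransient (P : Kernel X X) (ψ : Measure X) : Prop :=
  IsMaxIrreducibility P ψ ∧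
    ∃ (D : Set X) (A : ℕ → Set X), ψ D = 0 ∧ D ∪ (⋃ i, A i) = Set.univ ∧
      ∀ i, InBPlus ψ (A i) ∧ UnifGeomTransientSet P (A i)

/-- A uniformly `ℓ`-transient set. -/
def UnifAlgTransientSet (P : Kernel X X) (ℓ : ℕ) (A : Set X) : Prop :=
  (⨆ x ∈ A, ∑' n, ((n + 1 : ℕ) : ℝ≥0∞) ^ ℓ * iterP P (n + 1) x A) < ⊤

/-- The chain is algebraically (`ℓ`-)transient. -/
def AlgTransient (P : Kernel X X) (ψ : Measure X) (ℓ : ℕ) : Prop :=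
  IsMaxIrreducibility P ψ ∧
    ∃ (D : Set X) (A : ℕ → Set X), ψ D = 0 ∧ D ∪ (⋃ i, A i) = Set.univ ∧
      ∀ i, InBPlus ψ (A i) ∧ UnifAlgTransientSet P ℓ (A i)

/-- `lifeDist P x n = P_x(τ = n)` where `τ = sup{n : Φ_n ∈ X}` is the lifetime of the
(sub-stochastic) chain, so that `P_x(τ = n) = P^n(x, X) - P^{n+1}(x, X)`. -/
noncomputable def lifeDist (P : Kernel X X) (x : X) (n : ℕ) : ℝ≥0∞ :=
  iterP P n x Set.univ - iterP P (n + 1) x Set.univ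

/-- `lifeE P r x = E_x[r(τ)]` for the lifetime `τ` (on the event `τ < ∞`). -/
noncomputable def lifeE (P : Kernel X X) (r : ℕ → ℝ≥0∞) (x : X) : ℝ≥0∞ :=
  ∑' n, r n * lifeDist P x n

/-- The family `Λ` of normalized increasing submultiplicative rate functions. -/
def InLambda (r : ℕ → ℝ≥0) : Prop :=
  Monotone r ∧ r 0 = 1 ∧ (∀ n, 1 ≤ r n) ∧ ∀ m n, r (m + n) ≤ r m * r n

/-- Transition kernel of the random walk on the half line:
`P(x, ·)` is the law of `max (0, x + U)` where `U ∼ Γ`. -/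
noncomputable def rwKernel (Γ : Measure ℝ) [IsProbabilityMeasure Γ] : Kernel ℝ≥0 ℝ≥0 :=
  Kernel.map ((Kernel.id : Kernel ℝ≥0 ℝ≥0) ×ₖ Kernel.const ℝ≥0 Γ)
    (fun q : ℝ≥0 × ℝ => Real.toNNReal ((q.1 : ℝ) + q.2))

/-- The `n`-step transition law, as a measure. -/
noncomputable def iterM {Y : Type*} [MeasurableSpace Y] (P : Kernel Y Y) : ℕ → Y → Measure Y
  | 0 => fun x => Measure.dirac x
  | n + 1 => fun x => (P x).bind (iterM P n)

/-- The maximal irreducibility measure `ψ(·) = Σ_n 2^{-n} P^n(0, ·)` of the RWHL. -/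
noncomputable def rwPsi (Γ : Measure ℝ) [IsProbabilityMeasure Γ] : Measure ℝ≥0 :=
  Measure.sum fun n => ((2 : ℝ≥0∞) ^ n)⁻¹ • iterM (rwKernel Γ) n 0

/-!
For small `t > 0` the function `V x = exp (-t x)` satisfies the drift inequality
`PV ≤ ρ V` with `ρ = E[exp (-t U)] < 1`: the reflection at `0` only increases the position, and
`ρ < 1` because `t ↦ E[exp (-t U)]` equals `1` at `0` with right derivative `-β < 0`. Iterating and
applying Markov's inequality gives `P^n(x, [0, i]) ≤ exp (t i) ρ^n`, so every `[0, i]` is uniformly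
geometric transient. Irreducibility: increments `≤ -ε` have positive probability, so `0` is reached
from every state, which makes `Σ_n 2^{-n} P^n(0, ·)` a maximal irreducibility measure.
-/

section Iterates

variable (P : Kernel X X)

lemma measurable_iterM : ∀ n, Measurable (iterM P n)
  | 0 => Measure.measurable_dirac
  | n + 1 => (Measure.measurable_bind' (measurable_iterM n)).comp P.measurable

lemma iterM_apply (n : ℕ) (x : X) {A : Set X} (hA : MeasurableSet A) :
    iterM P n x A = iterP P n x A := by
  induction n generalizing x with
  | zero => exact Measure.dirac_apply' x hA
  | succ n ih =>
    simp only [iterM, iterP, ← ih]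
    exact Measure.bind_apply hA (measurable_iterM P n).aemeasurable

lemma iterP_univ [IsMarkovKernel P] (n : ℕ) (x : X) : iterP P n x Set.univ = 1 := by
  induction n generalizing x with
  | zero => simp [iterP]
  | succ n ih => simp [iterP, ih]

lemma iterP_mul_le_iterP_add (m n : ℕ) (x z : X) (A : Set X) :
    iterP P m x {z} * iterP P n z A ≤ iterP P (m + n) x A := by
  induction m generalizing x with
  | zero =>
    by_cases hx : x = z <;> simp [iterP, hx]
  | succ m ih =>
    rw [Nat.succ_add]
    calc iterP P (m + 1) x {z} * iterP P n z A
        ≤ ∫⁻ y, iterP P m y {z} * iterP P n z A ∂(P x) := lintegral_mul_const_le _ _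
      _ ≤ iterP P (m + n + 1) x A := lintegral_mono fun y => ih y

end Iterates

section Resolvent

variable (P : Kernel X X) (z : X)

/-- `rwPsi Γ` is `resolventMeasure (rwKernel Γ) 0` by definition. -/
noncomputable def resolventMeasure : Measure X :=
  Measure.sum fun n => ((2 : ℝ≥0∞) ^ n)⁻¹ • iterM P n z

variable {P z}

lemma resolventMeasure_apply {A : Set X} (hA : MeasurableSet A) :
    resolventMeasure P z A = ∑' n, ((2 : ℝ≥0∞) ^ n)⁻¹ * iterP P n z A := by
  simp [resolventMeasure, Measure.sum_apply _ hA, iterM_apply P _ _ hA]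

lemma resolventMeasure_pos_iff {A : Set X} (hA : MeasurableSet A) :
    0 < resolventMeasure P z A ↔ ∃ n, 0 < iterP P n z A := by
  simp [resolventMeasure_apply hA, pos_iff_ne_zero, ENNReal.tsum_eq_zero]

lemma resolventMeasure_univ [IsMarkovKernel P] : resolventMeasure P z Set.univ = 2 := by
  simp only [resolventMeasure_apply MeasurableSet.univ, iterP_univ, mul_one, ENNReal.inv_pow]
  rw [ENNReal.tsum_geometric, ENNReal.one_sub_inv_two, inv_inv]

theorem isMaxIrreducibility_resolventMeasure [IsMarkovKernel P]
    (hreach : ∀ x, ∃ m, 0 < iterP P (m + 1) x {z}) :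
    IsMaxIrreducibility P (resolventMeasure P z) := by
  refine ⟨⟨fun h => by simpa [h] using resolventMeasure_univ (P := P) (z := z), ?_, ?_⟩, ?_⟩
  · have : IsFiniteMeasure (resolventMeasure P z) := ⟨by simp [resolventMeasure_univ]⟩
    infer_instance
  · intro A hA hpos x
    obtain ⟨n, hn⟩ := (resolventMeasure_pos_iff hA).1 hpos
    obtain ⟨m, hm⟩ := hreach x
    refine (ENNReal.mul_pos hm.ne' hn.ne').trans_le
      ((iterP_mul_le_iterP_add P (m + 1) n x z A).trans ?_)
    rw [Nat.add_right_comm]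
    exact ENNReal.le_tsum (m + n)
  · rintro ψ' ⟨-, -, hirr⟩
    refine Measure.AbsolutelyContinuous.mk fun B hB hψB => ?_
    by_contra hψ'B
    obtain ⟨n, hn⟩ : ∃ n, 0 < iterP P (n + 1) z B := by
      simpa [pos_iff_ne_zero, ENNReal.tsum_eq_zero] using hirr B hB (pos_iff_ne_zero.2 hψ'B) z
    exact (resolventMeasure_pos_iff hB).2 ⟨n + 1, hn⟩ |>.ne' hψB

lemma resolventMeasure_pos_of_mem {A : Set X} (hA : MeasurableSet A) (hz : z ∈ A) :
    0 < resolventMeasure P z A :=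
  (resolventMeasure_pos_iff hA).2 ⟨0, by simp [iterP, hz]⟩

end Resolvent

section Drift

variable {P : Kernel X X} {V : X → ℝ≥0∞} {ρ c : ℝ≥0∞} {A : Set X}

/-- Markov's inequality on `A` for `P^n V ≤ ρ^n V`. -/
lemma mul_iterP_le_of_drift (hdrift : ∀ x, act P V x ≤ ρ * V x) (hρ : ρ ≠ ⊤)
    (hcV : ∀ x ∈ A, c ≤ V x) (n : ℕ) (x : X) : c * iterP P n x A ≤ ρ ^ n * V x := by
  induction n generalizing x with
  | zero =>
    by_cases hx : x ∈ A
    · simpa [iterP, hx] using hcV x hx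
    · simp [iterP, hx]
  | succ n ih =>
    calc c * iterP P (n + 1) x A
        ≤ ∫⁻ y, c * iterP P n y A ∂(P x) := lintegral_const_mul_le _ _
      _ ≤ ∫⁻ y, ρ ^ n * V y ∂(P x) := lintegral_mono fun y => ih y
      _ = ρ ^ n * act P V x := lintegral_const_mul' _ _ (ENNReal.pow_ne_top hρ)
      _ ≤ ρ ^ n * (ρ * V x) := by gcongr; exact hdrift x
      _ = ρ ^ (n + 1) * V x := by ring

lemma exists_one_lt_mul_lt_one (hρ : ρ < 1) : ∃ κ : ℝ≥0, 1 < κ ∧ (κ : ℝ≥0∞) * ρ < 1 := by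
  lift ρ to ℝ≥0 using hρ.ne_top
  obtain ⟨μ, hρμ, hμ⟩ := exists_between (ENNReal.coe_lt_one_iff.1 hρ)
  have hμ0 : 0 < μ := pos_of_gt hρμ
  refine ⟨μ⁻¹, (one_lt_inv₀ hμ0).2 hμ, ?_⟩
  rw [← ENNReal.coe_mul, ENNReal.coe_lt_one_iff]
  exact (inv_mul_lt_one₀ hμ0).2 hρμ

lemma unifGeomTransientSet_of_drift (hdrift : ∀ x, act P V x ≤ ρ * V x) (hρ : ρ < 1)
    {C : ℝ≥0∞} (hc : c ≠ 0) (hC : C ≠ ⊤) (hcV : ∀ x ∈ A, c ≤ V x) (hVC : ∀ x ∈ A, V x ≤ C) :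
    UnifGeomTransientSet P A := by
  obtain ⟨κ, hκ, hκρ⟩ := exists_one_lt_mul_lt_one hρ
  have hterm : ∀ x ∈ A, ∀ n, (κ : ℝ≥0∞) ^ (n + 1) * iterP P (n + 1) x A ≤
      C / c * ((κ : ℝ≥0∞) * ρ) ^ n := fun x hx n => by
    have hiter : iterP P (n + 1) x A ≤ ρ ^ (n + 1) * C / c := by
      rw [ENNReal.le_div_iff_mul_le (Or.inl hc) (Or.inr (ENNReal.mul_ne_top
        (ENNReal.pow_ne_top hρ.ne_top) hC)), mul_comm]
      exact (mul_iterP_le_of_drift hdrift hρ.ne_top hcV _ x).trans (by gcongr; exact hVC x hx)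
    calc (κ : ℝ≥0∞) ^ (n + 1) * iterP P (n + 1) x A
        ≤ (κ : ℝ≥0∞) ^ (n + 1) * (ρ ^ (n + 1) * C / c) := by gcongr
      _ = C / c * ((κ : ℝ≥0∞) * ρ) ^ (n + 1) := by simp only [mul_pow, div_eq_mul_inv]; ring
      _ ≤ C / c * ((κ : ℝ≥0∞) * ρ) ^ n :=
          mul_le_mul_right (pow_le_pow_of_le_one zero_le hκρ.le n.le_succ) _
  refine ⟨κ, hκ, lt_of_le_of_lt (iSup₂_le fun x hx => ?_) (b := C / c * (1 - κ * ρ)⁻¹) ?_⟩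
  · rw [← ENNReal.tsum_geometric, ← ENNReal.tsum_mul_left]
    exact ENNReal.tsum_le_tsum (hterm x hx)
  · exact ENNReal.mul_lt_top (ENNReal.div_lt_top hC hc)
      (ENNReal.inv_lt_top.2 (tsub_pos_of_lt hκρ))

end Drift

section Exponential

open Real Filter Topology

lemma integrable_exp_neg_mul {μ : Measure ℝ} [IsFiniteMeasure μ] {γ : ℝ} (hγ : 0 ≤ γ)
    (h : ∫⁻ x in Set.Iio 0, ENNReal.ofReal (exp (-γ * x)) ∂μ < ⊤) :
    Integrable (fun x => exp (-γ * x)) μ := by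
  refine ⟨by fun_prop, ?_⟩
  rw [hasFiniteIntegral_iff_ofReal (ae_of_all _ fun _ => (exp_pos _).le),
    ← lintegral_add_compl _ measurableSet_Iio]
  refine ENNReal.add_lt_top.2 ⟨h, lt_of_le_of_lt (b := ∫⁻ _ in (Set.Iio 0)ᶜ, 1 ∂μ) ?_ (by simp)⟩
  refine setLIntegral_mono measurable_const fun x hx => ?_
  rw [Set.mem_compl_iff, Set.notMem_Iio] at hx
  exact ENNReal.ofReal_le_one.2 (exp_le_one_iff.2 (by nlinarith))

lemma abs_inv_mul_exp_neg_mul_sub_one_le {γ t : ℝ} (hγ : 0 < γ) (ht : 0 < t) (htγ : t ≤ γ / 2)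
    (u : ℝ) : |t⁻¹ * (exp (-t * u) - 1)| ≤ |u| + 2 / γ * exp (-γ * u) := by
  rw [abs_mul, abs_inv, abs_of_pos ht, inv_mul_le_iff₀ ht]
  have hexp := (exp_pos (-γ * u)).le
  rcases le_or_gt 0 u with hu | hu
  · have h1 : exp (-t * u) ≤ 1 := exp_le_one_iff.2 (by nlinarith)
    have h2 := add_one_le_exp (-t * u)
    rw [abs_of_nonpos (by linarith), abs_of_nonneg hu]
    nlinarith [mul_nonneg ht.le (mul_nonneg (div_pos two_pos hγ).le hexp)]
  · have hmono : exp (-t * u) ≤ exp (-(γ / 2) * u) := exp_le_exp.2 (by nlinarith)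
    have hsq : exp (-(γ / 2) * u) * exp (-(γ / 2) * u) = exp (-γ * u) := by
      rw [← exp_add]; ring_nf
    have h1 : exp (-t * u) - 1 ≤ -t * u * exp (-t * u) := by
      have := mul_le_mul_of_nonneg_right (add_one_le_exp (t * u)) (exp_pos (-t * u)).le
      rw [← exp_add, show t * u + -t * u = 0 by ring, exp_zero] at this
      nlinarith
    have h2 : -u ≤ 2 / γ * exp (-(γ / 2) * u) := by
      have := add_one_le_exp (-(γ / 2) * u)
      rw [div_mul_eq_mul_div, le_div_iff₀ hγ]
      nlinarith
    rw [abs_of_nonneg (by linarith [one_le_exp_iff.2 (by nlinarith : 0 ≤ -t * u)]),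
      abs_of_neg hu]
    calc exp (-t * u) - 1 ≤ t * (-u * exp (-t * u)) := by linarith
      _ ≤ t * (2 / γ * exp (-(γ / 2) * u) * exp (-(γ / 2) * u)) := by gcongr
      _ ≤ t * (-u + 2 / γ * exp (-γ * u)) := by
        rw [mul_assoc, hsq]; nlinarith

/-- By dominated convergence (with `abs_inv_mul_exp_neg_mul_sub_one_le`), `t ↦ E[exp (-t U)]`
has right derivative `-E[U] < 0` at `0`. -/
theorem exists_lintegral_exp_neg_mul_lt_one {μ : Measure ℝ} [IsProbabilityMeasure μ]
    (hmean : 0 < ∫ x, x ∂μ) {γ : ℝ} (hγ : 0 < γ)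
    (hexp : ∫⁻ x in Set.Iio 0, ENNReal.ofReal (exp (-γ * x)) ∂μ < ⊤) :
    ∃ t : ℝ, 0 < t ∧ ∫⁻ x, ENNReal.ofReal (exp (-t * x)) ∂μ < 1 := by
  have hint : Integrable (fun x : ℝ => x) μ := by
    by_contra h
    simp [integral_undef h] at hmean
  have hbound := hint.abs.add ((integrable_exp_neg_mul hγ.le hexp).const_mul (2 / γ))
  have hsmall : ∀ᶠ t in 𝓝[>] (0 : ℝ), t ∈ Set.Ioc 0 (γ / 2) :=
    Ioc_mem_nhdsGT (half_pos hγ)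
  have hlim : Tendsto (fun t => ∫ x, t⁻¹ * (exp (-t * x) - 1) ∂μ) (𝓝[>] 0)
      (𝓝 (∫ x, -x ∂μ)) := by
    refine tendsto_integral_filter_of_dominated_convergence _
      (Eventually.of_forall fun t => by fun_prop)
      (hsmall.mono fun t ht => ae_of_all _ fun x =>
        abs_inv_mul_exp_neg_mul_sub_one_le hγ ht.1 ht.2 x) hbound
      (ae_of_all _ fun x => ?_)
    have hderiv : HasDerivAt (fun t => exp (-t * x)) (-x) 0 := by
      simpa using ((hasDerivAt_neg 0).mul_const x).exp
    refine ((hasDerivAt_iff_tendsto_slope.1 hderiv).mono_left (nhdsGT_le_nhdsNE 0)).congr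
      fun t => ?_
    simp [slope_def_field, div_eq_inv_mul]
  rw [integral_neg] at hlim
  obtain ⟨t, hneg, ht⟩ := ((hlim.eventually_lt_const (neg_neg_of_pos hmean)).and hsmall).exists
  have hF : Integrable (fun x => t⁻¹ * (exp (-t * x) - 1)) μ :=
    hbound.mono' (by fun_prop)
      (ae_of_all _ fun x => abs_inv_mul_exp_neg_mul_sub_one_le hγ ht.1 ht.2 x)
  have hexp_eq : (fun x => exp (-t * x)) = fun x => t * (t⁻¹ * (exp (-t * x) - 1)) + 1 := by
    ext x; rw [mul_inv_cancel_left₀ ht.1.ne']; ring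
  have hI : Integrable (fun x => exp (-t * x)) μ := by
    rw [hexp_eq]; exact (hF.const_mul t).add (integrable_const 1)
  refine ⟨t, ht.1, ?_⟩
  rw [← ofReal_integral_eq_lintegral_ofReal hI (ae_of_all _ fun _ => (exp_pos _).le),
    ENNReal.ofReal_lt_one, hexp_eq, integral_add (hF.const_mul t) (integrable_const 1),
    integral_const_mul]
  simp only [integral_const, probReal_univ, smul_eq_mul, one_mul]
  nlinarith [ht.1]

end Exponential

section RandomWalk

variable (Γ : Measure ℝ) [IsProbabilityMeasure Γ]

lemma measurable_toNNReal_add :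
    Measurable fun q : ℝ≥0 × ℝ => Real.toNNReal ((q.1 : ℝ) + q.2) := by
  fun_prop

instance : IsMarkovKernel (rwKernel Γ) :=
  Kernel.IsMarkovKernel.map _ measurable_toNNReal_add

lemma rwKernel_apply (x : ℝ≥0) :
    rwKernel Γ x = Γ.map fun u => Real.toNNReal ((x : ℝ) + u) := by
  rw [rwKernel, Kernel.map_apply _ measurable_toNNReal_add, Kernel.prod_apply, Kernel.id_apply,
    Kernel.const_apply, Measure.dirac_prod, Measure.map_map measurable_toNNReal_add
    measurable_prodMk_left]
  rfl

lemma exists_pos_measure_Iic_neg {μ : Measure ℝ} (h : 0 < μ (Set.Iio 0)) :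
    ∃ ε > 0, 0 < μ (Set.Iic (-ε)) := by
  by_contra! hμ
  have hunion : ⋃ n : ℕ, Set.Iic (-(1 / ((n : ℝ) + 1))) = Set.Iio 0 :=
    iUnion_Iic_eq_Iio_of_lt_of_tendsto (F := Filter.atTop) (fun n => by simp; positivity)
      (by simpa only [neg_zero] using (tendsto_one_div_add_atTop_nhds_zero_nat (𝕜 := ℝ)).neg)
  rw [← hunion, measure_iUnion_null fun n => nonpos_iff_eq_zero.1 (hμ _ (by positivity))] at h
  exact h.false

lemma measure_Iic_neg_le_rwKernel (x : ℝ≥0) (ε : ℝ) :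
    Γ (Set.Iic (-ε)) ≤ rwKernel Γ x (Set.Iic (Real.toNNReal ((x : ℝ) - ε))) := by
  rw [rwKernel_apply, Measure.map_apply (by fun_prop) measurableSet_Iic]
  exact measure_mono fun u (hu : u ≤ -ε) => Real.toNNReal_le_toNNReal (by linarith)

lemma pow_measure_Iic_neg_le_iterP_zero {ε : ℝ} (hε : 0 < ε) (m : ℕ) (x : ℝ≥0)
    (hx : (x : ℝ) ≤ m * ε) : Γ (Set.Iic (-ε)) ^ m ≤ iterP (rwKernel Γ) m x {0} := by
  induction m generalizing x with
  | zero =>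
    obtain rfl : x = 0 := NNReal.coe_eq_zero.1 (le_antisymm (by simpa using hx) x.2)
    simp [iterP]
  | succ m ih =>
    set c := Real.toNNReal ((x : ℝ) - ε)
    have hc : ∀ y ∈ Set.Iic c, Γ (Set.Iic (-ε)) ^ m ≤ iterP (rwKernel Γ) m y {0} := by
      intro y hy
      refine ih y ?_
      have : (y : ℝ) ≤ max ((x : ℝ) - ε) 0 := by simpa [c, ← NNReal.coe_le_coe] using hy
      push_cast at hx
      exact this.trans (max_le (by linarith) (by positivity))
    calc Γ (Set.Iic (-ε)) ^ (m + 1)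
        ≤ Γ (Set.Iic (-ε)) ^ m * rwKernel Γ x (Set.Iic c) := by
          rw [pow_succ]; gcongr; exact measure_Iic_neg_le_rwKernel Γ x ε
      _ = ∫⁻ y, (Set.Iic c).indicator (fun _ => Γ (Set.Iic (-ε)) ^ m) y ∂(rwKernel Γ x) :=
          (lintegral_indicator_const measurableSet_Iic _).symm
      _ ≤ ∫⁻ y, iterP (rwKernel Γ) m y {0} ∂(rwKernel Γ x) :=
          lintegral_mono (Set.indicator_le hc)

lemma rwKernel_reaches_zero (hneg : 0 < Γ (Set.Iio 0)) (x : ℝ≥0) :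
    ∃ m, 0 < iterP (rwKernel Γ) (m + 1) x {0} := by
  obtain ⟨ε, hε, hpos⟩ := exists_pos_measure_Iic_neg hneg
  refine ⟨⌈(x : ℝ) / ε⌉₊, (ENNReal.pow_pos hpos _).trans_le
    (pow_measure_Iic_neg_le_iterP_zero Γ hε _ x ?_)⟩
  rw [← div_le_iff₀ hε]
  push_cast
  linarith [Nat.le_ceil ((x : ℝ) / ε)]

lemma rwPsi_isMaxIrreducibility (hneg : 0 < Γ (Set.Iio 0)) :
    IsMaxIrreducibility (rwKernel Γ) (rwPsi Γ) :=
  isMaxIrreducibility_resolventMeasure (rwKernel_reaches_zero Γ hneg)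

/-- Uses `x + u ≤ max (0, x + u)`. -/
lemma act_rwKernel_exp_neg_mul_le {t : ℝ} (ht : 0 ≤ t) (x : ℝ≥0) :
    act (rwKernel Γ) (fun y => ENNReal.ofReal (Real.exp (-t * y))) x ≤
      (∫⁻ u, ENNReal.ofReal (Real.exp (-t * u)) ∂Γ) * ENNReal.ofReal (Real.exp (-t * x)) := by
  rw [act, rwKernel_apply, ← lintegral_mul_const' _ _ ENNReal.ofReal_ne_top]
  refine (lintegral_map_le _ _).trans (lintegral_mono fun u => ?_)
  rw [← ENNReal.ofReal_mul (Real.exp_pos _).le, ← Real.exp_add]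
  refine ENNReal.ofReal_le_ofReal (Real.exp_le_exp.2 ?_)
  nlinarith [Real.le_coe_toNNReal ((x : ℝ) + u)]

end RandomWalk

theorem rwhl_geomTransient
    (Γ : Measure ℝ) [IsProbabilityMeasure Γ] (hneg : 0 < Γ (Set.Iio 0))
    (hβ : 0 < ∫ x, x ∂Γ)
    (hexp : ∃ γ : ℝ, 0 < γ ∧
      (∫⁻ x in Set.Iio 0, ENNReal.ofReal (Real.exp (-γ * x)) ∂Γ) < ⊤) :
    GeomTransient (rwKernel Γ) (rwPsi Γ) := by
  obtain ⟨γ, hγ, hγexp⟩ := hexp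
  obtain ⟨t, ht, hρ⟩ := exists_lintegral_exp_neg_mul_lt_one hβ hγ hγexp
  refine ⟨rwPsi_isMaxIrreducibility Γ hneg, ∅, fun i => Set.Iic (i : ℝ≥0), measure_empty, ?_,
    fun i => ⟨⟨measurableSet_Iic, ?_⟩, ?_⟩⟩
  · rw [Set.empty_union]
    exact Set.eq_univ_of_forall fun x => Set.mem_iUnion.2 ⟨⌈x⌉₊, Nat.le_ceil x⟩
  · exact resolventMeasure_pos_of_mem measurableSet_Iic (Set.mem_Iic.2 zero_le)
  · refine unifGeomTransientSet_of_drift (act_rwKernel_exp_neg_mul_le Γ ht.le) hρ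
      (c := ENNReal.ofReal (Real.exp (-t * i))) (C := 1) (by simp [Real.exp_pos])
      ENNReal.one_ne_top (fun x hx => ?_) (fun x _ => ?_)
    · exact ENNReal.ofReal_le_ofReal (Real.exp_le_exp.2 (by
        have : (x : ℝ) ≤ i := hx
        nlinarith))
    · exact ENNReal.ofReal_le_one.2 (Real.exp_le_one_iff.2 (by nlinarith [x.2]))

end MarkovTransience
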